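/- Let Θ be the solution of the Cauchy problem dy/dx = [φ(x,y)·∏_{i=1}^{m}(x - iδ) + Υ(x,y)] / f(x,y) with Θ(0) = δ^m, where f(0,0) ≠ 0, φ(0,0) ≠ 0, Υ(x,0) ≡ 0 and m ≥ 1. Then for sufficiently small δ > 0 the estimate Θ(x) = δ^m + o(δ^m) holds uniformly for x ∈ [0, (m+1)δ]; in particular Θ(x) > 0 on this interval. -/
import Mathlib


set_option maxHeartbeats 2000000 in
/-- for the Cauchy problem
`dy/dx = (φ(x,y)·∏_{i=1}^m (x - iδ) + Υ(x,y)) / f(x,y)`, `Θ(0) = δ^m`,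
with `f(0,0) ≠ 0`, `φ(0,0) ≠ 0`, `Υ(x,0) ≡ 0`, `m ≥ 1`, the solution satisfies
`Θ(x) = δ^m + o(δ^m)` uniformly on `[0, (m+1)δ]` for small `δ > 0`; in particular
`Θ(x) > 0` there. -/
theorem theta_estimate (m : ℕ) (hm : 1 ≤ m) (f φ Υ : ℝ × ℝ → ℝ)
    (hf : ContDiff ℝ (⊤ : ℕ∞) f) (hφ : ContDiff ℝ (⊤ : ℕ∞) φ) (hΥ : ContDiff ℝ (⊤ : ℕ∞) Υ)
    (hf0 : f (0, 0) ≠ 0) (hφ0 : φ (0, 0) ≠ 0) (hΥ0 : ∀ x : ℝ, Υ (x, 0) = 0) :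
    ∀ ε > (0 : ℝ), ∃ δ0 > (0 : ℝ), ∀ δ : ℝ, 0 < δ → δ < δ0 →
      ∀ Θ : ℝ → ℝ, Θ 0 = δ ^ m →
      (∀ x ∈ Set.Icc (0 : ℝ) (((m : ℝ) + 1) * δ),
        HasDerivAt Θ
          ((φ (x, Θ x) * (∏ i ∈ Finset.Icc 1 m, (x - (i : ℝ) * δ)) + Υ (x, Θ x)) /
            f (x, Θ x)) x) →
      ∀ x ∈ Set.Icc (0 : ℝ) (((m : ℝ) + 1) * δ),
        |Θ x - δ ^ m| ≤ ε * δ ^ m ∧ 0 < Θ x := by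
  -- constants coming from f, φ, Υ near the origin
  have hfabs : (0:ℝ) < |f (0,0)| := abs_pos.mpr hf0
  set c : ℝ := |f (0,0)| / 2 with hc_def
  have hc : 0 < c := by positivity
  obtain ⟨r1, hr1, hfb⟩ := Metric.continuousAt_iff.mp (hf.continuous.continuousAt) c hc
  have hfb' : ∀ p : ℝ × ℝ, dist p (0,0) < r1 → c ≤ |f p| := by
    intro p hp
    have h := hfb hp
    rw [Real.dist_eq] at h
    have h' : |f (0,0) - f p| < c := by rw [abs_sub_comm]; exact h
    have h2 := abs_sub_abs_le_abs_sub (f (0,0)) (f p)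
    have h3 : c = |f (0,0)| - c := by rw [hc_def]; ring
    linarith
  set M : ℝ := |φ (0,0)| + 1 with hM_def
  have hM : 0 < M := by positivity
  obtain ⟨r2, hr2, hφb⟩ := Metric.continuousAt_iff.mp (hφ.continuous.continuousAt) 1 one_pos
  have hφb' : ∀ p : ℝ × ℝ, dist p (0,0) < r2 → |φ p| ≤ M := by
    intro p hp
    have h := hφb hp
    rw [Real.dist_eq] at h
    have := abs_sub_abs_le_abs_sub (φ p) (φ (0,0))
    rw [hM_def]; linarith
  have hΥ1 : ContDiffAt ℝ 1 Υ ((0:ℝ),(0:ℝ)) := hΥ.contDiffAt.of_le (by simp)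
  obtain ⟨K, t, ht, hK⟩ := hΥ1.exists_lipschitzOnWith
  obtain ⟨r3, hr3, hball⟩ := Metric.mem_nhds_iff.mp ht
  set r : ℝ := min r1 (min r2 r3) with hr_def
  have hr : 0 < r := lt_min hr1 (lt_min hr2 hr3)
  have hrr1 : r ≤ r1 := min_le_left _ _
  have hrr2 : r ≤ r2 := le_trans (min_le_right _ _) (min_le_left _ _)
  have hrr3 : r ≤ r3 := le_trans (min_le_right _ _) (min_le_right _ _)
  set C : ℝ := (M * ((m:ℝ)+1)^m + 2*K) / c with hC_def
  have hKnn : (0:ℝ) ≤ K := K.coe_nonneg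
  have hC : 0 < C := by
    apply div_pos _ hc
    have : (0:ℝ) < ((m:ℝ)+1)^m := by positivity
    nlinarith
  intro ε hε
  set ε₁ : ℝ := min ε (1/2) with hε₁_def
  have hε₁ : 0 < ε₁ := lt_min hε (by norm_num)
  have hε₁le : ε₁ ≤ ε := min_le_left _ _
  have hε₁half : ε₁ ≤ 1/2 := min_le_right _ _
  have hm1 : (1:ℝ) ≤ (m:ℝ) := by exact_mod_cast hm
  have hm1pos : (0:ℝ) < (m:ℝ) + 1 := by linarith
  refine ⟨min (min 1 (r/(2*((m:ℝ)+1)))) (ε₁/(2*C*((m:ℝ)+1))), ?_, ?_⟩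
  · apply lt_min (lt_min one_pos (by positivity)) (by positivity)
  intro δ hδ hδ0 Θ hΘ0 hder
  set T : ℝ := ((m:ℝ)+1)*δ with hT_def
  have hδ1 : δ < 1 := lt_of_lt_of_le hδ0 (le_trans (min_le_left _ _) (min_le_left _ _))
  have hδr : δ * (2*((m:ℝ)+1)) < r := by
    have h := lt_of_lt_of_le hδ0 (le_trans (min_le_left _ _) (min_le_right _ _))
    exact (lt_div_iff₀ (by positivity)).mp h
  have hδε : δ * (2*C*((m:ℝ)+1)) < ε₁ := by
    have h := lt_of_lt_of_le hδ0 (min_le_right _ _)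
    exact (lt_div_iff₀ (by positivity)).mp h
  have hδm : (0:ℝ) < δ^m := by positivity
  have hδmδ : δ^m ≤ δ := by
    calc δ^m ≤ δ^1 := pow_le_pow_of_le_one hδ.le hδ1.le hm
    _ = δ := pow_one δ
  have hTr : T < r := by rw [hT_def]; nlinarith
  have h2δr : 2*δ < r := by nlinarith
  have hT0 : 0 ≤ T := by positivity
  -- continuity of Θ on [0,T]
  have hΘcont : ∀ s ∈ Set.Icc (0:ℝ) T, ContinuousAt Θ s := fun s hs =>
    (hder s hs).differentiableAt.continuousAt
  -- the key claim
  have key : ∀ s ∈ Set.Icc (0:ℝ) T, |Θ s - δ^m| ≤ ε₁ * δ^m := by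
    by_contra hcon
    push_neg at hcon
    obtain ⟨t0, ht0, hgt⟩ := hcon
    set B : Set ℝ := {s ∈ Set.Icc (0:ℝ) T | ε₁ * δ^m ≤ |Θ s - δ^m|} with hB_def
    have hBsub : B ⊆ Set.Icc (0:ℝ) T := fun s hs => hs.1
    have hBne : B.Nonempty := ⟨t0, ht0, hgt.le⟩
    have hBbdd : BddBelow B := ⟨0, fun s hs => hs.1.1⟩
    have hBclosed : IsClosed B := by
      apply isClosed_of_closure_subset
      intro s hs
      have hsI : s ∈ Set.Icc (0:ℝ) T :=
        isClosed_Icc.closure_subset ((closure_mono hBsub) hs)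
      refine ⟨hsI, ?_⟩
      have hcont : ContinuousWithinAt (fun u => |Θ u - δ^m|) B s :=
        (((hΘcont s hsI).sub continuousAt_const).abs).continuousWithinAt
      have hne : (nhdsWithin s B).NeBot := mem_closure_iff_nhdsWithin_neBot.mp hs
      exact ge_of_tendsto hcont (eventually_mem_nhdsWithin.mono (fun u hu => hu.2))
    set s₀ : ℝ := sInf B with hs₀_def
    have hs₀B : s₀ ∈ B := hBclosed.csInf_mem hBne hBbdd
    have hs₀I : s₀ ∈ Set.Icc (0:ℝ) T := hs₀B.1
    have hs₀ge : ε₁ * δ^m ≤ |Θ s₀ - δ^m| := hs₀B.2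
    have hs₀pos : 0 < s₀ := by
      rcases lt_or_eq_of_le hs₀I.1 with h | h
      · exact h
      · exfalso
        rw [← h, hΘ0, sub_self, abs_zero] at hs₀ge
        exact absurd hs₀ge (not_le.mpr (mul_pos hε₁ hδm))
    have hlt : ∀ u, 0 ≤ u → u < s₀ → |Θ u - δ^m| < ε₁ * δ^m := by
      intro u hu0 hus
      by_contra hle
      push_neg at hle
      have huB : u ∈ B := ⟨⟨hu0, le_trans (le_of_lt hus) hs₀I.2⟩, hle⟩
      exact absurd (csInf_le hBbdd huB) (not_le.mpr hus)
    -- region bound on [0, s₀]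
    have hreg : ∀ u ∈ Set.Icc (0:ℝ) s₀, |Θ u - δ^m| ≤ ε₁ * δ^m := by
      intro u hu
      rcases lt_or_eq_of_le hu.2 with h | h
      · exact (hlt u hu.1 h).le
      · rw [h]
        have hclos : s₀ ∈ closure (Set.Ico (0:ℝ) s₀) := by
          rw [closure_Ico (ne_of_gt hs₀pos).symm]
          exact ⟨hs₀pos.le, le_refl s₀⟩
        have hne : (nhdsWithin s₀ (Set.Ico (0:ℝ) s₀)).NeBot :=
          mem_closure_iff_nhdsWithin_neBot.mp hclos
        have hcont : ContinuousWithinAt (fun v => |Θ v - δ^m|) (Set.Ico (0:ℝ) s₀) s₀ :=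
          (((hΘcont s₀ hs₀I).sub continuousAt_const).abs).continuousWithinAt
        exact le_of_tendsto hcont (eventually_mem_nhdsWithin.mono
          (fun v hv => (hlt v hv.1 hv.2).le))
    have hs₀T : s₀ ≤ T := hs₀I.2
    -- derivative bound on [0, s₀]
    have hdbound : ∀ u ∈ Set.Icc (0:ℝ) s₀,
        ‖(φ (u, Θ u) * (∏ i ∈ Finset.Icc 1 m, (u - (i:ℝ)*δ)) + Υ (u, Θ u)) / f (u, Θ u)‖
          ≤ C * δ^m := by
      intro u hu
      have huT : u ∈ Set.Icc (0:ℝ) T := ⟨hu.1, hu.2.trans hs₀T⟩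
      have hΘu : |Θ u - δ^m| ≤ ε₁ * δ^m := hreg u hu
      have hΘu2 : |Θ u| ≤ 2*δ^m := by
        have h1 := abs_sub_abs_le_abs_sub (Θ u) (δ^m)
        have habs : |δ^m| = δ^m := abs_of_pos hδm
        have h5 : ε₁ * δ^m ≤ (1/2) * δ^m := mul_le_mul_of_nonneg_right hε₁half hδm.le
        linarith
      have hdistu : dist ((u:ℝ), Θ u) ((0:ℝ),(0:ℝ)) < r := by
        rw [Prod.dist_eq]
        apply max_lt
        · rw [Real.dist_eq, sub_zero, abs_of_nonneg hu.1]
          exact lt_of_le_of_lt (hu.2.trans hs₀T) hTr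
        · rw [Real.dist_eq, sub_zero]
          calc |Θ u| ≤ 2*δ^m := hΘu2
          _ ≤ 2*δ := by linarith
          _ < r := h2δr
      have hmemt : ((u:ℝ), Θ u) ∈ t := hball (by
        rw [Metric.mem_ball]; exact lt_of_lt_of_le hdistu hrr3)
      have hmemt0 : ((u:ℝ), (0:ℝ)) ∈ t := by
        apply hball
        rw [Metric.mem_ball, Prod.dist_eq]
        apply max_lt
        · rw [Real.dist_eq, sub_zero, abs_of_nonneg hu.1]
          exact lt_of_lt_of_le (lt_of_le_of_lt (hu.2.trans hs₀T) hTr) hrr3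
        · simpa using hr3
      have hΥu : |Υ (u, Θ u)| ≤ (K:ℝ) * (2*δ^m) := by
        have h1 := hK.dist_le_mul ((u:ℝ), Θ u) hmemt ((u:ℝ), (0:ℝ)) hmemt0
        rw [hΥ0 u, Real.dist_eq, sub_zero] at h1
        have hd : dist ((u:ℝ), Θ u) ((u:ℝ), (0:ℝ)) = |Θ u| := by
          rw [Prod.dist_eq]
          simp [Real.dist_eq]
        rw [hd] at h1
        calc |Υ (u, Θ u)| ≤ (K:ℝ) * |Θ u| := h1
        _ ≤ (K:ℝ) * (2*δ^m) := mul_le_mul_of_nonneg_left hΘu2 hKnn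
      have hφu : |φ (u, Θ u)| ≤ M := hφb' _ (lt_of_lt_of_le hdistu hrr2)
      have hfu : c ≤ |f (u, Θ u)| := hfb' _ (lt_of_lt_of_le hdistu hrr1)
      have hprod : |∏ i ∈ Finset.Icc 1 m, (u - (i:ℝ)*δ)| ≤ (((m:ℝ)+1)*δ)^m := by
        rw [Finset.abs_prod]
        have hfac : ∀ i ∈ Finset.Icc 1 m, |u - (i:ℝ)*δ| ≤ ((m:ℝ)+1)*δ := by
          intro i hi
          have hi1 : 1 ≤ i := (Finset.mem_Icc.mp hi).1
          have him : i ≤ m := (Finset.mem_Icc.mp hi).2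
          have hiR : (i:ℝ) ≤ (m:ℝ) := by exact_mod_cast him
          have hiR1 : (1:ℝ) ≤ (i:ℝ) := by exact_mod_cast hi1
          have hu0 : 0 ≤ u := hu.1
          have huT' : u ≤ ((m:ℝ)+1)*δ := hu.2.trans hs₀T
          rw [abs_le]
          constructor <;> nlinarith
        calc ∏ i ∈ Finset.Icc 1 m, |u - (i:ℝ)*δ|
            ≤ ∏ _i ∈ Finset.Icc 1 m, (((m:ℝ)+1)*δ) :=
          Finset.prod_le_prod (fun i _ => abs_nonneg _) hfac
        _ = (((m:ℝ)+1)*δ)^m := by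
          rw [Finset.prod_const, Nat.card_Icc]
          simp
      have hnum : |φ (u, Θ u) * (∏ i ∈ Finset.Icc 1 m, (u - (i:ℝ)*δ)) + Υ (u, Θ u)|
          ≤ (M * ((m:ℝ)+1)^m + 2*(K:ℝ)) * δ^m := by
        have h1 : |φ (u, Θ u) * (∏ i ∈ Finset.Icc 1 m, (u - (i:ℝ)*δ))|
            ≤ M * ((((m:ℝ)+1)*δ)^m) := by
          rw [abs_mul]
          exact mul_le_mul hφu hprod (abs_nonneg _) hM.le
        have h2 : (((m:ℝ)+1)*δ)^m = ((m:ℝ)+1)^m * δ^m := mul_pow _ _ _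
        calc |φ (u, Θ u) * (∏ i ∈ Finset.Icc 1 m, (u - (i:ℝ)*δ)) + Υ (u, Θ u)|
            ≤ |φ (u, Θ u) * (∏ i ∈ Finset.Icc 1 m, (u - (i:ℝ)*δ))| + |Υ (u, Θ u)| := abs_add_le _ _
        _ ≤ M * (((m:ℝ)+1)^m * δ^m) + (K:ℝ)*(2*δ^m) := by
          rw [← h2]; exact add_le_add h1 hΥu
        _ = (M * ((m:ℝ)+1)^m + 2*(K:ℝ)) * δ^m := by ring
      have hquot : |φ (u, Θ u) * (∏ i ∈ Finset.Icc 1 m, (u - (i:ℝ)*δ)) + Υ (u, Θ u)| /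
          |f (u, Θ u)| ≤ ((M * ((m:ℝ)+1)^m + 2*(K:ℝ)) * δ^m) / c :=
        div_le_div₀ (by positivity) hnum hc hfu
      have hCeq : ((M * ((m:ℝ)+1)^m + 2*(K:ℝ)) * δ^m) / c = C * δ^m := by
        rw [hC_def]; ring
      rw [Real.norm_eq_abs, abs_div, ← hCeq]
      exact hquot
    have hmvt : ‖Θ s₀ - Θ 0‖ ≤ (C * δ^m) * ‖s₀ - 0‖ :=
      Convex.norm_image_sub_le_of_norm_hasDerivWithin_le
        (fun u hu => (hder u ⟨hu.1, hu.2.trans hs₀T⟩).hasDerivWithinAt)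
        hdbound (convex_Icc (0:ℝ) s₀)
        (Set.left_mem_Icc.mpr hs₀pos.le) (Set.right_mem_Icc.mpr hs₀pos.le)
    rw [hΘ0, Real.norm_eq_abs, Real.norm_eq_abs, sub_zero, abs_of_nonneg hs₀pos.le] at hmvt
    have h1 : C * δ^m * s₀ ≤ C * δ^m * T :=
      mul_le_mul_of_nonneg_left hs₀T (by positivity)
    have h2 : C * δ^m * T < (ε₁/2) * δ^m := by
      rw [hT_def]
      nlinarith [mul_pos hδm (sub_pos.mpr hδε)]
    have h3 : ε₁ * δ^m ≤ C * δ^m * s₀ := le_trans hs₀ge hmvt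
    nlinarith [mul_pos hε₁ hδm]
  intro x hx
  have h := key x hx
  have h5 : ε₁ * δ^m ≤ (1/2) * δ^m := mul_le_mul_of_nonneg_right hε₁half hδm.le
  constructor
  · calc |Θ x - δ^m| ≤ ε₁*δ^m := h
    _ ≤ ε*δ^m := mul_le_mul_of_nonneg_right hε₁le hδm.le
  · have h4 := abs_le.mp h
    linarith [h4.1]
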